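/- Classification: two linearly minimal homomorphism dilation systems of (φ, A, V) are equivalent if and only if their associated reduced subspaces in A⊗V coincide: K₁ = K₂. -/
import Mathlib


open scoped TensorProduct

variable (k : Type*) [Field k] (A : Type*) [Ring A] [Algebra k A]
  (V : Type*) [AddCommGroup V] [Module k V]

/-- The universal homomorphism `π_u(a)(b ⊗ x) = (ab) ⊗ x` on `A ⊗ V`. -/
noncomputable def piU : A →ₐ[k] Module.End k (A ⊗[k] V) where
  toFun a := LinearMap.rTensor V (LinearMap.mulLeft k a)
  map_one' := by ext b v; simp
  map_mul' a b := by ext c v; simp [mul_assoc]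
  map_zero' := by ext a v; simp
  map_add' a b := by ext c v; simp [add_mul, TensorProduct.add_tmul]
  commutes' c := by
    ext a v
    simp [Algebra.algebraMap_eq_smul_one, smul_mul_assoc, TensorProduct.smul_tmul']

/-- The universal analysis operator `T(x) = 1 ⊗ x`. -/
noncomputable def Tu : V →ₗ[k] A ⊗[k] V := TensorProduct.mk k A V 1

/-- The universal synthesis operator `S(a ⊗ x) = φ(a) x`. -/
noncomputable def Su (φ : A →ₗ[k] Module.End k V) : A ⊗[k] V →ₗ[k] V :=
  TensorProduct.lift (φ : A →ₗ[k] V →ₗ[k] V)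

/-- The linear map `A ⊗ V → W₁`, `a ⊗ x ↦ π₁(a) T₁ x`; its kernel is the reduced
subspace associated with the dilation system `(π₁, S₁, T₁, W₁)`. -/
noncomputable def Theta (W₁ : Type*) [AddCommGroup W₁] [Module k W₁]
    (π₁ : A →ₐ[k] Module.End k W₁) (T₁ : V →ₗ[k] W₁) : A ⊗[k] V →ₗ[k] W₁ :=
  TensorProduct.lift ((LinearMap.lcomp k W₁ T₁) ∘ₗ π₁.toLinearMap)


lemma Theta_tmul_aux (k : Type*) [Field k] (A : Type*) [Ring A] [Algebra k A]
    (V : Type*) [AddCommGroup V] [Module k V]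
    (W : Type*) [AddCommGroup W] [Module k W]
    (π : A →ₐ[k] Module.End k W) (T : V →ₗ[k] W) (a : A) (x : V) :
    Theta k A V W π T (a ⊗ₜ x) = π a (T x) := by
  simp [Theta]

lemma Theta_surj_aux (k : Type*) [Field k] (A : Type*) [Ring A] [Algebra k A]
    (V : Type*) [AddCommGroup V] [Module k V]
    (W : Type*) [AddCommGroup W] [Module k W]
    (π : A →ₐ[k] Module.End k W) (T : V →ₗ[k] W)
    (hmin : Submodule.span k {w : W | ∃ (a : A) (x : V), w = π a (T x)} = ⊤) :
    Function.Surjective (Theta k A V W π T) := by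
  rw [← LinearMap.range_eq_top, ← top_le_iff, ← hmin, Submodule.span_le]
  rintro w ⟨a, x, rfl⟩
  exact ⟨a ⊗ₜ x, Theta_tmul_aux k A V W π T a x⟩

lemma Theta_comm_aux (k : Type*) [Field k] (A : Type*) [Ring A] [Algebra k A]
    (V : Type*) [AddCommGroup V] [Module k V]
    (W : Type*) [AddCommGroup W] [Module k W]
    (π : A →ₐ[k] Module.End k W) (T : V →ₗ[k] W) (a : A) (u : A ⊗[k] V) :
    Theta k A V W π T (piU k A V a u) = π a (Theta k A V W π T u) := by
  have : Theta k A V W π T ∘ₗ (piU k A V a : _ →ₗ[k] _)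
      = (π a : W →ₗ[k] W) ∘ₗ Theta k A V W π T := by
    apply TensorProduct.ext'
    intro b x
    simp [Theta, piU]
  exact LinearMap.congr_fun this u

lemma quotKer_mk_aux {k : Type*} [Field k] {M N : Type*} [AddCommGroup M] [Module k M]
    [AddCommGroup N] [Module k N]
    (f : M →ₗ[k] N) (hf : Function.Surjective f) (u : M) :
    (LinearMap.quotKerEquivOfSurjective f hf) (Submodule.Quotient.mk u) = f u := by
  simp [LinearMap.quotKerEquivOfSurjective, LinearMap.quotKerEquivRange_apply_mk]

/-- classification: two linearly minimal homomorphism dilation systems of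
`(φ, A, V)` are equivalent if and only if their reduced subspaces in `A ⊗ V` coincide. -/
theorem equivalent_iff_reduced_subspaces_equal (φ : A →ₗ[k] Module.End k V) (hφ : φ 1 = 1)
    (W₁ : Type*) [AddCommGroup W₁] [Module k W₁]
    (W₂ : Type*) [AddCommGroup W₂] [Module k W₂]
    (π₁ : A →ₐ[k] Module.End k W₁) (T₁ : V →ₗ[k] W₁) (S₁ : W₁ →ₗ[k] V)
    (hT₁ : Function.Injective T₁) (hS₁ : Function.Surjective S₁)
    (hdil₁ : ∀ a : A, (φ a : V →ₗ[k] V) = S₁ ∘ₗ (π₁ a : W₁ →ₗ[k] W₁) ∘ₗ T₁)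
    (hmin₁ : Submodule.span k {w : W₁ | ∃ (a : A) (x : V), w = π₁ a (T₁ x)} = ⊤)
    (π₂ : A →ₐ[k] Module.End k W₂) (T₂ : V →ₗ[k] W₂) (S₂ : W₂ →ₗ[k] V)
    (hT₂ : Function.Injective T₂) (hS₂ : Function.Surjective S₂)
    (hdil₂ : ∀ a : A, (φ a : V →ₗ[k] V) = S₂ ∘ₗ (π₂ a : W₂ →ₗ[k] W₂) ∘ₗ T₂)
    (hmin₂ : Submodule.span k {w : W₂ | ∃ (a : A) (x : V), w = π₂ a (T₂ x)} = ⊤) :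
    (∃ R : W₁ ≃ₗ[k] W₂, (∀ x : V, R (T₁ x) = T₂ x) ∧ (∀ w : W₁, S₂ (R w) = S₁ w) ∧
        ∀ (a : A) (w : W₁), R (π₁ a w) = π₂ a (R w)) ↔
      LinearMap.ker (Theta k A V W₁ π₁ T₁) = LinearMap.ker (Theta k A V W₂ π₂ T₂) := by
  constructor
  · rintro ⟨R, hRT, hRS, hRπ⟩
    have hcomp : Theta k A V W₂ π₂ T₂ = (R : W₁ →ₗ[k] W₂) ∘ₗ Theta k A V W₁ π₁ T₁ := by
      apply TensorProduct.ext'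
      intro a x
      simp only [LinearMap.coe_comp, Function.comp_apply, LinearEquiv.coe_coe,
        Theta_tmul_aux]
      rw [hRπ, hRT]
    ext u
    simp [hcomp, LinearMap.mem_ker, map_eq_zero_iff _ R.injective]
  · intro h
    have hsurj₁ := Theta_surj_aux k A V W₁ π₁ T₁ hmin₁
    have hsurj₂ := Theta_surj_aux k A V W₂ π₂ T₂ hmin₂
    set Θ₁ := Theta k A V W₁ π₁ T₁
    set Θ₂ := Theta k A V W₂ π₂ T₂
    let e₁ := LinearMap.quotKerEquivOfSurjective Θ₁ hsurj₁
    let e₂ := LinearMap.quotKerEquivOfSurjective Θ₂ hsurj₂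
    let R : W₁ ≃ₗ[k] W₂ :=
      e₁.symm.trans ((Submodule.quotEquivOfEq _ _ h).trans e₂)
    have hkey : ∀ u : A ⊗[k] V, R (Θ₁ u) = Θ₂ u := by
      intro u
      have h1 : e₁.symm (Θ₁ u) = Submodule.Quotient.mk u := by
        apply e₁.injective
        simp [e₁, quotKer_mk_aux]
      simp [R, h1, Submodule.quotEquivOfEq_mk, e₂, quotKer_mk_aux]
    refine ⟨R, ?_, ?_, ?_⟩
    · intro x
      have h1 : T₁ x = Θ₁ ((1 : A) ⊗ₜ x) := by
        simp [Θ₁, Theta_tmul_aux]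
      have h2 : T₂ x = Θ₂ ((1 : A) ⊗ₜ x) := by
        simp [Θ₂, Theta_tmul_aux]
      rw [h1, h2, hkey]
    · intro w
      obtain ⟨u, rfl⟩ := hsurj₁ w
      rw [hkey]
      have : S₂ ∘ₗ Θ₂ = S₁ ∘ₗ Θ₁ := by
        apply TensorProduct.ext'
        intro a x
        have e1 := LinearMap.congr_fun (hdil₁ a) x
        have e2 := LinearMap.congr_fun (hdil₂ a) x
        simp only [LinearMap.coe_comp, Function.comp_apply] at e1 e2 ⊢
        simp only [Θ₁, Θ₂, Theta_tmul_aux, ← e1, ← e2]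
      exact LinearMap.congr_fun this u
    · intro a w
      obtain ⟨u, rfl⟩ := hsurj₁ w
      rw [← Theta_comm_aux k A V W₁ π₁ T₁ a u, hkey, hkey,
        Theta_comm_aux k A V W₂ π₂ T₂ a u]
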